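/- (Second-order Taylor remainder bound for holomorphic Banach-valued maps.) Let F be holomorphic and bounded by C on a ball of radius ℓ around W + H₁ in a complex Banach space, with values in another complex Banach space. Then for all K with ‖K‖ ≤ ℓ/4, ‖F(W + H₁ + K) − F(W + H₁) − δF(W + H₁; K)‖ ≤ 8C‖K‖²/ℓ², where δF(Z; K) = lim_{s→0} (F(Z + sK) − F(Z))/s is the first variation. Moreover, if this estimate holds uniformly at every point t ∈ [0,T] for a pair of continuous Banach-valued curves, then the induced superposition map on C⁰([0,T], ·) is Fréchet ℂ-differentiable, hence holomorphic. -/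

import Mathlib

set_option maxRecDepth 8000


open Metric

namespace Stmt17Aux

variable {E : Type*} [NormedAddCommGroup E] [NormedSpace ℂ E]

/-- Second-order Taylor remainder bound, complete codomain case. -/
lemma taylor_complete {G : Type*} [NormedAddCommGroup G] [NormedSpace ℂ G] [CompleteSpace G]
    (Φ : E → G) (x : E) (r C : ℝ) (hr : 0 < r) (hC : 0 ≤ C)
    (hΦ : DifferentiableOn ℂ Φ (ball x r))
    (hbd : ∀ z ∈ ball x r, ‖Φ z‖ ≤ C)
    (K : E) (hK : ‖K‖ ≤ r / 4) :
    ‖Φ (x + K) - Φ x - fderiv ℂ Φ x K‖ ≤ 8 * C * ‖K‖ ^ 2 / r ^ 2 := by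
  rcases eq_or_ne K 0 with rfl | hK0
  · simp
  have hKpos : 0 < ‖K‖ := norm_pos_iff.2 hK0
  set ρ : ℝ := r / (2 * ‖K‖) with hρdef
  have hρ2 : 2 ≤ ρ := by
    rw [hρdef, le_div_iff₀ (by positivity)]
    linarith
  have hρpos : 0 < ρ := lt_of_lt_of_le (by norm_num) hρ2
  set g : ℂ → G := fun s => Φ (x + s • K) with hgdef
  have hmaps : ∀ s : ℂ, ‖s‖ ≤ ρ → x + s • K ∈ ball x r := by
    intro s hs
    rw [mem_ball, dist_eq_norm, add_sub_cancel_left, norm_smul]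
    have h1 : ‖s‖ * ‖K‖ ≤ ρ * ‖K‖ := mul_le_mul_of_nonneg_right hs (norm_nonneg K)
    have h2 : ρ * ‖K‖ = r / 2 := by
      rw [hρdef]; field_simp
    have : r / 2 < r := by linarith
    linarith
  set R : NNReal := ⟨ρ, hρpos.le⟩ with hRdef
  have hRρ : (R : ℝ) = ρ := rfl
  have hgd : DifferentiableOn ℂ g (closedBall (0 : ℂ) R) := by
    intro s hs
    have hs' : ‖s‖ ≤ ρ := by
      rw [mem_closedBall_zero_iff] at hs
      exact hs.trans_eq hRρ
    have h1 : DifferentiableAt ℂ Φ (x + s • K) :=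
      hΦ.differentiableAt (isOpen_ball.mem_nhds (hmaps s hs'))
    have h2 : DifferentiableAt ℂ (fun s : ℂ => x + s • K) s :=
      (differentiableAt_id.smul_const K).const_add x
    exact (h1.comp s h2).differentiableWithinAt
  have hps : HasFPowerSeriesOnBall g (cauchyPowerSeries g 0 R) 0 R :=
    hgd.hasFPowerSeriesOnBall (by exact_mod_cast hρpos)
  set p := cauchyPowerSeries g 0 (R : ℝ) with hpdef
  clear_value p
  -- coefficient bounds
  have hcoeff : ∀ n, ‖p.coeff n‖ ≤ C * ρ⁻¹ ^ n := by
    intro n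
    have h1 : ‖p n‖ ≤ ((2 * Real.pi)⁻¹ * ∫ θ : ℝ in (0)..2 * Real.pi,
        ‖g (circleMap 0 ρ θ)‖) * |ρ|⁻¹ ^ n := by
      rw [hpdef]
      exact norm_cauchyPowerSeries_le g 0 ρ n
    have hint : ∀ θ ∈ Set.Icc (0 : ℝ) (2 * Real.pi), ‖g (circleMap 0 ρ θ)‖ ≤ C := by
      intro θ _
      refine hbd _ (hmaps _ ?_)
      rw [norm_circleMap_zero, abs_of_pos hρpos]
    have hcont : Continuous fun θ : ℝ => ‖g (circleMap 0 ρ θ)‖ := by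
      apply Continuous.norm
      have := hgd.continuousOn.comp_continuous (continuous_circleMap 0 ρ)
        (fun θ => by simpa [hRρ] using circleMap_mem_closedBall (0 : ℂ) hρpos.le θ)
      exact this
    have hI : (∫ θ : ℝ in (0)..2 * Real.pi, ‖g (circleMap 0 ρ θ)‖) ≤ 2 * Real.pi * C := by
      have := intervalIntegral.integral_mono_on (a := (0:ℝ)) (b := 2 * Real.pi)
        Real.two_pi_pos.le
        (hcont.intervalIntegrable (μ := MeasureTheory.volume) 0 (2 * Real.pi))
        intervalIntegrable_const hint
      simpa using this
    have hcoe : ‖p.coeff n‖ ≤ ‖p n‖ := by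
      have h2 := (p n).le_opNorm (1 : Fin n → ℂ)
      simp only [Pi.one_apply, norm_one, Finset.prod_const_one, mul_one] at h2
      exact h2
    have habs : |ρ| = ρ := abs_of_pos hρpos
    calc ‖p.coeff n‖ ≤ ‖p n‖ := hcoe
      _ ≤ ((2 * Real.pi)⁻¹ * ∫ θ : ℝ in (0)..2 * Real.pi, ‖g (circleMap 0 ρ θ)‖) * |ρ|⁻¹ ^ n :=
          h1
      _ ≤ ((2 * Real.pi)⁻¹ * (2 * Real.pi * C)) * |ρ|⁻¹ ^ n := by
          gcongr
      _ = C * ρ⁻¹ ^ n := by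
          rw [habs]
          have hπ : (2 * Real.pi) ≠ 0 := by positivity
          field_simp
  -- the series sums to `Φ (x + K)` at `1`
  have h1R : (1 : ℂ) ∈ Metric.eball (0 : ℂ) R := by
    have h1 : (1 : NNReal) < R := by
      rw [← NNReal.coe_lt_coe, hRρ]
      push_cast
      linarith
    simp only [Metric.mem_eball, edist_eq_enorm_sub, sub_zero, enorm_one]
    exact_mod_cast h1
  have hsum : HasSum (fun n => p.coeff n) (Φ (x + K)) := by
    have h2 := hps.hasSum h1R
    simp only [zero_add, FormalMultilinearSeries.apply_eq_pow_smul_coeff, one_pow, one_smul] at h2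
    simpa [hgdef] using h2
  have hc0 : p.coeff 0 = Φ x := by
    have h2 : p 0 (fun _ => (1 : ℂ)) = Φ x := by
      simpa [hgdef] using hps.coeff_zero fun _ => (1 : ℂ)
    exact h2
  have hDx : HasFDerivAt Φ (fderiv ℂ Φ x) x :=
    (hΦ.differentiableAt (isOpen_ball.mem_nhds (mem_ball_self hr))).hasFDerivAt
  have hin : HasDerivAt (fun s : ℂ => x + s • K) K 0 := by
    simpa using ((hasDerivAt_id (0 : ℂ)).smul_const K).const_add x
  have hDx' : HasFDerivAt Φ (fderiv ℂ Φ x) ((fun s : ℂ => x + s • K) 0) := by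
    simpa using hDx
  have hg0 : HasDerivAt g (fderiv ℂ Φ x K) 0 := hDx'.comp_hasDerivAt 0 hin
  have hc1 : p.coeff 1 = fderiv ℂ Φ x K := by
    have h3 := hps.hasFPowerSeriesAt.deriv
    rw [hg0.deriv] at h3
    exact h3.symm
  -- tail sum
  have htail : HasSum (fun n => p.coeff (n + 2)) (Φ (x + K) - p.coeff 0 - p.coeff 1) := by
    apply (hasSum_nat_add_iff (f := fun n => p.coeff n) 2).2
    convert hsum using 1
    rw [Finset.sum_range_succ, Finset.sum_range_one]
    abel
  have hρinv1 : ρ⁻¹ < 1 := by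
    rw [inv_lt_one_iff₀]
    right; linarith
  have hb : HasSum (fun n : ℕ => C * ρ⁻¹ ^ 2 * ρ⁻¹ ^ n) (C * ρ⁻¹ ^ 2 * (1 - ρ⁻¹)⁻¹) :=
    (hasSum_geometric_of_lt_one (by positivity) hρinv1).mul_left _
  have hnorm : ‖Φ (x + K) - p.coeff 0 - p.coeff 1‖ ≤ C * ρ⁻¹ ^ 2 * (1 - ρ⁻¹)⁻¹ := by
    rw [← htail.tsum_eq]
    apply tsum_of_norm_bounded hb
    intro n
    calc ‖p.coeff (n + 2)‖ ≤ C * ρ⁻¹ ^ (n + 2) := hcoeff (n + 2)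
      _ = C * ρ⁻¹ ^ 2 * ρ⁻¹ ^ n := by ring
  rw [hc0, hc1] at hnorm
  refine hnorm.trans ?_
  have hρinv : ρ⁻¹ = 2 * ‖K‖ / r := by rw [hρdef, inv_div]
  have hhalf : ρ⁻¹ ≤ 2⁻¹ := by
    rw [inv_le_inv₀ hρpos (by norm_num)]
    exact hρ2
  have h2' : (1 - ρ⁻¹)⁻¹ ≤ 2 := by
    have hpos : (0:ℝ) < 1 - ρ⁻¹ := by norm_num at hhalf ⊢; linarith
    rw [inv_le_comm₀ hpos (by norm_num)]
    norm_num at hhalf ⊢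
    linarith
  calc C * ρ⁻¹ ^ 2 * (1 - ρ⁻¹)⁻¹ ≤ C * ρ⁻¹ ^ 2 * 2 := by
        apply mul_le_mul_of_nonneg_left h2' (by positivity)
    _ = 8 * C * ‖K‖ ^ 2 / r ^ 2 := by
        rw [hρinv]
        field_simp
        ring

/-- Second-order Taylor remainder bound, general codomain. -/
lemma taylor {F : Type*} [NormedAddCommGroup F] [NormedSpace ℂ F]
    (Φ : E → F) (x : E) (r C : ℝ) (hr : 0 < r) (hC : 0 ≤ C)
    (hΦ : DifferentiableOn ℂ Φ (ball x r))
    (hbd : ∀ z ∈ ball x r, ‖Φ z‖ ≤ C)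
    (K : E) (hK : ‖K‖ ≤ r / 4) :
    ‖Φ (x + K) - Φ x - fderiv ℂ Φ x K‖ ≤ 8 * C * ‖K‖ ^ 2 / r ^ 2 := by
  set j : F →L[ℂ] UniformSpace.Completion F :=
    (UniformSpace.Completion.toComplL : F →L[ℂ] UniformSpace.Completion F) with hjdef
  have hj : ∀ y : F, ‖j y‖ = ‖y‖ := fun y => by
    rw [hjdef, UniformSpace.Completion.coe_toComplL]
    exact UniformSpace.Completion.norm_coe y
  have hΦ' : DifferentiableOn ℂ (fun z => j (Φ z)) (ball x r) :=
    j.differentiable.comp_differentiableOn hΦ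
  have hbd' : ∀ z ∈ ball x r, ‖j (Φ z)‖ ≤ C := fun z hz => by
    rw [hj]; exact hbd z hz
  have hx : DifferentiableAt ℂ Φ x :=
    hΦ.differentiableAt (isOpen_ball.mem_nhds (mem_ball_self hr))
  have hfd : HasFDerivAt (fun z => j (Φ z)) (j.comp (fderiv ℂ Φ x)) x :=
    j.hasFDerivAt.comp x hx.hasFDerivAt
  have h := taylor_complete (fun z => j (Φ z)) x r C hr hC hΦ' hbd' K hK
  rw [hfd.fderiv] at h
  calc ‖Φ (x + K) - Φ x - fderiv ℂ Φ x K‖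
      = ‖j (Φ (x + K) - Φ x - fderiv ℂ Φ x K)‖ := (hj _).symm
    _ = ‖j (Φ (x + K)) - j (Φ x) - j.comp (fderiv ℂ Φ x) K‖ := by rw [map_sub, map_sub]; rfl
    _ ≤ 8 * C * ‖K‖ ^ 2 / r ^ 2 := h

variable {F : Type*} [NormedAddCommGroup F] [NormedSpace ℂ F]

/-- Taylor remainder bound at any point of the half ball. -/
lemma taylor_half (Φ : E → F) (c : E) (ℓ C : ℝ) (hℓ : 0 < ℓ) (hC : 0 ≤ C)
    (hΦ : DifferentiableOn ℂ Φ (ball c ℓ))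
    (hbd : ∀ z ∈ ball c ℓ, ‖Φ z‖ ≤ C)
    {x K : E} (hx : x ∈ closedBall c (ℓ / 2)) (hK : ‖K‖ ≤ ℓ / 8) :
    ‖Φ (x + K) - Φ x - fderiv ℂ Φ x K‖ ≤ 32 * C * ‖K‖ ^ 2 / ℓ ^ 2 := by
  have hxc : dist x c ≤ ℓ / 2 := mem_closedBall.1 hx
  have hsub : ball x (ℓ / 2) ⊆ ball c ℓ := ball_subset_ball' (by linarith)
  have h := taylor Φ x (ℓ / 2) C (by linarith) hC (hΦ.mono hsub)
    (fun z hz => hbd z (hsub hz)) K (by linarith)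
  refine h.trans_eq ?_
  field_simp
  ring

/-- Bound on the derivative on the half ball. -/
lemma fderiv_bound (Φ : E → F) (c : E) (ℓ C : ℝ) (hℓ : 0 < ℓ) (hC : 0 < C)
    (hΦ : DifferentiableOn ℂ Φ (ball c ℓ))
    (hbd : ∀ z ∈ ball c ℓ, ‖Φ z‖ ≤ C)
    {x : E} (hx : x ∈ closedBall c (ℓ / 2)) :
    ‖fderiv ℂ Φ x‖ ≤ 40 * C / ℓ := by
  have hxc : dist x c ≤ ℓ / 2 := mem_closedBall.1 hx
  apply ContinuousLinearMap.opNorm_le_of_shell (ε := ℓ / 8) (by positivity) (by positivity)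
    (c := (2 : ℂ)) (by norm_num)
  intro K hK1 hK2
  have h2 : ‖(2 : ℂ)‖ = 2 := by norm_num
  rw [h2] at hK1
  have hK16 : ℓ / 16 ≤ ‖K‖ := by linarith
  have ht := taylor_half Φ c ℓ C hℓ hC.le hΦ hbd hx hK2.le
  have hx1 : x ∈ ball c ℓ := mem_ball.2 (lt_of_le_of_lt hxc (by linarith))
  have hx2 : x + K ∈ ball c ℓ := by
    rw [mem_ball, dist_eq_norm]
    calc ‖x + K - c‖ = ‖(x - c) + K‖ := by rw [add_sub_right_comm]
      _ ≤ ‖x - c‖ + ‖K‖ := norm_add_le _ _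
      _ < ℓ := by
          rw [← dist_eq_norm] at *
          linarith
  have hb1 : ‖Φ (x + K)‖ ≤ C := hbd _ hx2
  have hb2 : ‖Φ x‖ ≤ C := hbd _ hx1
  have hKnn : (0:ℝ) ≤ ‖K‖ := norm_nonneg K
  calc ‖(fderiv ℂ Φ x) K‖
      = ‖(Φ (x + K) - Φ x) - (Φ (x + K) - Φ x - fderiv ℂ Φ x K)‖ := by congr 1; abel
    _ ≤ ‖Φ (x + K) - Φ x‖ + ‖Φ (x + K) - Φ x - fderiv ℂ Φ x K‖ := norm_sub_le _ _
    _ ≤ (‖Φ (x + K)‖ + ‖Φ x‖) + 32 * C * ‖K‖ ^ 2 / ℓ ^ 2 := add_le_add (norm_sub_le _ _) ht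
    _ ≤ (C + C) + 32 * C * (ℓ / 8 * ‖K‖) / ℓ ^ 2 := by
        gcongr
        rw [sq]
        exact mul_le_mul_of_nonneg_right hK2.le hKnn
    _ = 2 * C + 4 * C * ‖K‖ / ℓ := by field_simp; ring
    _ ≤ 40 * C / ℓ * ‖K‖ := by
        rw [div_mul_eq_mul_div, le_div_iff₀ hℓ, add_mul, div_mul_cancel₀ _ hℓ.ne']
        nlinarith [mul_le_mul_of_nonneg_left (show ℓ ≤ 16 * ‖K‖ by linarith) hC.le,
          mul_nonneg hC.le hKnn]

/-- Lipschitz bound on the half ball. -/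
lemma lip (Φ : E → F) (c : E) (ℓ C : ℝ) (hℓ : 0 < ℓ) (hC : 0 < C)
    (hΦ : DifferentiableOn ℂ Φ (ball c ℓ))
    (hbd : ∀ z ∈ ball c ℓ, ‖Φ z‖ ≤ C)
    {x y : E} (hx : x ∈ closedBall c (ℓ / 2)) (hy : y ∈ closedBall c (ℓ / 2)) :
    ‖Φ y - Φ x‖ ≤ 40 * C / ℓ * ‖y - x‖ := by
  refine (convex_closedBall c (ℓ / 2)).norm_image_sub_le_of_norm_fderiv_le
    (fun z hz => hΦ.differentiableAt (isOpen_ball.mem_nhds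
      (mem_ball.2 (lt_of_le_of_lt (mem_closedBall.1 hz) (by linarith)))))
    (fun z hz => fderiv_bound Φ c ℓ C hℓ hC hΦ hbd hz) hx hy

/-- Quantitative near-Lipschitz estimate for the derivative on the quarter ball. -/
lemma fderiv_dist (Φ : E → F) (c : E) (ℓ C : ℝ) (hℓ : 0 < ℓ) (hC : 0 < C)
    (hΦ : DifferentiableOn ℂ Φ (ball c ℓ))
    (hbd : ∀ z ∈ ball c ℓ, ‖Φ z‖ ≤ C)
    {x y : E} (hx : x ∈ closedBall c (ℓ / 4)) (hy : y ∈ closedBall c (ℓ / 4))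
    {ε : ℝ} (hε : 0 < ε) (hεle : ε ≤ ℓ / 8) :
    ‖fderiv ℂ Φ x - fderiv ℂ Φ y‖ ≤ 160 * C / ℓ * ‖x - y‖ / ε + 64 * C / ℓ ^ 2 * ε := by
  have hxc : dist x c ≤ ℓ / 4 := mem_closedBall.1 hx
  have hyc : dist y c ≤ ℓ / 4 := mem_closedBall.1 hy
  have hRHS : (0:ℝ) ≤ 160 * C / ℓ * ‖x - y‖ / ε + 64 * C / ℓ ^ 2 * ε := by positivity
  apply ContinuousLinearMap.opNorm_le_of_shell (ε := ε) hε hRHS (c := (2 : ℂ)) (by norm_num)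
  intro K hK1 hK2
  have h2 : ‖(2 : ℂ)‖ = 2 := by norm_num
  rw [h2] at hK1
  have hKle : ‖K‖ ≤ ℓ / 8 := le_trans hK2.le hεle
  have hx2 : x ∈ closedBall c (ℓ / 2) := mem_closedBall.2 (by linarith)
  have hy2 : y ∈ closedBall c (ℓ / 2) := mem_closedBall.2 (by linarith)
  have hxK : x + K ∈ closedBall c (ℓ / 2) := by
    rw [mem_closedBall, dist_eq_norm]
    calc ‖x + K - c‖ = ‖(x - c) + K‖ := by rw [add_sub_right_comm]
      _ ≤ ‖x - c‖ + ‖K‖ := norm_add_le _ _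
      _ ≤ ℓ / 2 := by rw [← dist_eq_norm]; linarith
  have hyK : y + K ∈ closedBall c (ℓ / 2) := by
    rw [mem_closedBall, dist_eq_norm]
    calc ‖y + K - c‖ = ‖(y - c) + K‖ := by rw [add_sub_right_comm]
      _ ≤ ‖y - c‖ + ‖K‖ := norm_add_le _ _
      _ ≤ ℓ / 2 := by rw [← dist_eq_norm]; linarith
  have hRx := taylor_half Φ c ℓ C hℓ hC.le hΦ hbd hx2 hKle
  have hRy := taylor_half Φ c ℓ C hℓ hC.le hΦ hbd hy2 hKle
  have hl1 : ‖Φ (x + K) - Φ (y + K)‖ ≤ 40 * C / ℓ * ‖x - y‖ := by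
    have := lip Φ c ℓ C hℓ hC hΦ hbd hyK hxK
    simpa [add_sub_add_right_eq_sub] using this
  have hl2 : ‖Φ x - Φ y‖ ≤ 40 * C / ℓ * ‖x - y‖ :=
    lip Φ c ℓ C hℓ hC hΦ hbd hy2 hx2
  have hkey : (fderiv ℂ Φ x - fderiv ℂ Φ y) K =
      (Φ (x + K) - Φ (y + K)) - (Φ x - Φ y)
        - (Φ (x + K) - Φ x - fderiv ℂ Φ x K) + (Φ (y + K) - Φ y - fderiv ℂ Φ y K) := by
    simp only [ContinuousLinearMap.sub_apply]
    abel
  have hKnn : (0:ℝ) ≤ ‖K‖ := norm_nonneg K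
  have hnormbd : ‖(fderiv ℂ Φ x - fderiv ℂ Φ y) K‖ ≤
      2 * (40 * C / ℓ) * ‖x - y‖ + 2 * (32 * C / ℓ ^ 2) * ‖K‖ ^ 2 := by
    rw [hkey]
    calc ‖(Φ (x + K) - Φ (y + K)) - (Φ x - Φ y)
        - (Φ (x + K) - Φ x - fderiv ℂ Φ x K) + (Φ (y + K) - Φ y - fderiv ℂ Φ y K)‖
        ≤ ‖(Φ (x + K) - Φ (y + K)) - (Φ x - Φ y)
            - (Φ (x + K) - Φ x - fderiv ℂ Φ x K)‖ + ‖Φ (y + K) - Φ y - fderiv ℂ Φ y K‖ :=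
          norm_add_le _ _
      _ ≤ (‖(Φ (x + K) - Φ (y + K)) - (Φ x - Φ y)‖ + ‖Φ (x + K) - Φ x - fderiv ℂ Φ x K‖)
            + ‖Φ (y + K) - Φ y - fderiv ℂ Φ y K‖ := by
          gcongr
          exact norm_sub_le _ _
      _ ≤ ((‖Φ (x + K) - Φ (y + K)‖ + ‖Φ x - Φ y‖) + ‖Φ (x + K) - Φ x - fderiv ℂ Φ x K‖)
            + ‖Φ (y + K) - Φ y - fderiv ℂ Φ y K‖ := by
          gcongr
          exact norm_sub_le _ _
      _ ≤ ((40 * C / ℓ * ‖x - y‖ + 40 * C / ℓ * ‖x - y‖) + 32 * C * ‖K‖ ^ 2 / ℓ ^ 2)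
            + 32 * C * ‖K‖ ^ 2 / ℓ ^ 2 := by
          gcongr
      _ = 2 * (40 * C / ℓ) * ‖x - y‖ + 2 * (32 * C / ℓ ^ 2) * ‖K‖ ^ 2 := by ring
  refine hnormbd.trans ?_
  rw [add_mul]
  apply add_le_add
  · calc 2 * (40 * C / ℓ) * ‖x - y‖ = 160 * C / ℓ * ‖x - y‖ / ε * (ε / 2) := by
          field_simp; ring
      _ ≤ 160 * C / ℓ * ‖x - y‖ / ε * ‖K‖ := by gcongr
  · have : ‖K‖ ^ 2 ≤ ε * ‖K‖ := by
      rw [sq]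
      exact mul_le_mul_of_nonneg_right hK2.le hKnn
    calc 2 * (32 * C / ℓ ^ 2) * ‖K‖ ^ 2 ≤ 2 * (32 * C / ℓ ^ 2) * (ε * ‖K‖) := by
          apply mul_le_mul_of_nonneg_left this (by positivity)
      _ = 64 * C / ℓ ^ 2 * ε * ‖K‖ := by ring

/-- Continuity of the derivative on the quarter ball. -/
lemma fderiv_cont (Φ : E → F) (c : E) (ℓ C : ℝ) (hℓ : 0 < ℓ) (hC : 0 < C)
    (hΦ : DifferentiableOn ℂ Φ (ball c ℓ))
    (hbd : ∀ z ∈ ball c ℓ, ‖Φ z‖ ≤ C) :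
    ContinuousOn (fderiv ℂ Φ) (closedBall c (ℓ / 4)) := by
  intro x hx
  rw [Metric.continuousWithinAt_iff]
  intro εt hεt
  set ε : ℝ := min (ℓ / 8) (εt * ℓ ^ 2 / (256 * C)) with hεdef
  have hεpos : 0 < ε := lt_min (by positivity) (by positivity)
  have hεle : ε ≤ ℓ / 8 := min_le_left _ _
  set δ : ℝ := εt * ε * ℓ / (640 * C) with hδdef
  have hδpos : 0 < δ := by positivity
  refine ⟨δ, hδpos, fun y hy hyx => ?_⟩
  have hbound := fderiv_dist Φ c ℓ C hℓ hC hΦ hbd hy hx hεpos hεle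
  have hyxnorm : ‖y - x‖ ≤ δ := by
    rw [← dist_eq_norm]
    exact hyx.le
  have hpart1 : 160 * C / ℓ * ‖y - x‖ / ε ≤ εt / 4 := by
    calc 160 * C / ℓ * ‖y - x‖ / ε ≤ 160 * C / ℓ * δ / ε := by gcongr
      _ = εt / 4 := by
          rw [hδdef]
          field_simp
          ring
  have hpart2 : 64 * C / ℓ ^ 2 * ε ≤ εt / 4 := by
    calc 64 * C / ℓ ^ 2 * ε ≤ 64 * C / ℓ ^ 2 * (εt * ℓ ^ 2 / (256 * C)) := by
          apply mul_le_mul_of_nonneg_left (min_le_right _ _) (by positivity)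
      _ = εt / 4 := by field_simp; ring
  rw [dist_eq_norm]
  calc ‖fderiv ℂ Φ y - fderiv ℂ Φ x‖ ≤ 160 * C / ℓ * ‖y - x‖ / ε + 64 * C / ℓ ^ 2 * ε := hbound
    _ ≤ εt / 4 + εt / 4 := add_le_add hpart1 hpart2
    _ < εt := by linarith

end Stmt17Aux

/-- Second-order Taylor remainder bound for holomorphic Banach-valued
maps, and holomorphy of the superposition operator: if `Φ` is holomorphic and bounded
by `C` on the ball of radius `ℓ` around `W + H₁`, then for `‖K‖ ≤ ℓ/4`,
`‖Φ(W+H₁+K) − Φ(W+H₁) − δΦ(W+H₁;K)‖ ≤ 8C‖K‖²/ℓ²`, where the first variation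
`δΦ(Z;K)` is the Fréchet derivative `fderiv ℂ Φ Z K`. Moreover the induced
superposition (Nemytskii) map on `C⁰([0,T],·)` agrees with `u ↦ Φ∘u` on curves valued
in the ball and is Fréchet ℂ-differentiable (hence holomorphic) at every curve valued
in the ball of radius `ℓ/4` around `W + H₁`. -/
theorem stmt_17
    {E F : Type*} [NormedAddCommGroup E] [NormedSpace ℂ E]
    [NormedAddCommGroup F] [NormedSpace ℂ F]
    (Φ : E → F) (W H₁ : E) (ℓ C : ℝ) (hℓ : 0 < ℓ) (hC : 0 < C)
    (hΦ : DifferentiableOn ℂ Φ (ball (W + H₁) ℓ))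
    (hbd : ∀ z ∈ ball (W + H₁) ℓ, ‖Φ z‖ ≤ C)
    (T : ℝ) (hT : 0 < T) :
    (∀ K : E, ‖K‖ ≤ ℓ / 4 →
      ‖Φ (W + H₁ + K) - Φ (W + H₁) - fderiv ℂ Φ (W + H₁) K‖
        ≤ 8 * C * ‖K‖ ^ 2 / ℓ ^ 2) ∧
    (∃ Ψ : C(Set.Icc (0:ℝ) T, E) → C(Set.Icc (0:ℝ) T, F),
      (∀ v : C(Set.Icc (0:ℝ) T, E),
        (∀ t : Set.Icc (0:ℝ) T, v t ∈ ball (W + H₁) ℓ) →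
        ∀ t : Set.Icc (0:ℝ) T, Ψ v t = Φ (v t)) ∧
      (∀ u : C(Set.Icc (0:ℝ) T, E),
        (∀ t : Set.Icc (0:ℝ) T, ‖u t - (W + H₁)‖ ≤ ℓ / 4) →
        DifferentiableAt ℂ Ψ u)) := by
  classical
  constructor
  · intro K hK
    exact Stmt17Aux.taylor Φ (W + H₁) ℓ C hℓ hC.le hΦ hbd K hK
  · set c : E := W + H₁ with hcdef
    have hcont : ∀ v : C(Set.Icc (0:ℝ) T, E), (∀ t, v t ∈ ball c ℓ) →
        Continuous fun t => Φ (v t) :=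
      fun v hv => hΦ.continuousOn.comp_continuous v.continuous hv
    refine ⟨fun v => if h : ∀ t, v t ∈ ball c ℓ then ⟨fun t => Φ (v t), hcont v h⟩ else 0,
      ?_, ?_⟩
    · intro v hv t
      simp only [dif_pos hv, ContinuousMap.coe_mk]
    · intro u hu
      have hut : ∀ t, u t ∈ closedBall c (ℓ / 4) := fun t => by
        rw [mem_closedBall, dist_eq_norm]; exact hu t
      have hut2 : ∀ t, u t ∈ closedBall c (ℓ / 2) := fun t =>
        mem_closedBall.2 ((mem_closedBall.1 (hut t)).trans (by linarith))
      have hDcont : Continuous fun t : Set.Icc (0:ℝ) T => fderiv ℂ Φ (u t) :=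
        (Stmt17Aux.fderiv_cont Φ c ℓ C hℓ hC hΦ hbd).comp_continuous u.continuous hut
      set L₀ : C(Set.Icc (0:ℝ) T, E) →ₗ[ℂ] C(Set.Icc (0:ℝ) T, F) :=
        { toFun := fun K => ⟨fun t => fderiv ℂ Φ (u t) (K t), hDcont.clm_apply K.continuous⟩
          map_add' := fun K1 K2 => by ext t; simp
          map_smul' := fun a K => by ext t; simp } with hL₀def
      have hLbound : ∀ K, ‖L₀ K‖ ≤ 40 * C / ℓ * ‖K‖ := by
        intro K
        refine (ContinuousMap.norm_le _ (by positivity)).2 fun t => ?_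
        show ‖fderiv ℂ Φ (u t) (K t)‖ ≤ 40 * C / ℓ * ‖K‖
        calc ‖fderiv ℂ Φ (u t) (K t)‖ ≤ ‖fderiv ℂ Φ (u t)‖ * ‖K t‖ :=
              ContinuousLinearMap.le_opNorm _ _
          _ ≤ 40 * C / ℓ * ‖K‖ :=
              mul_le_mul (Stmt17Aux.fderiv_bound Φ c ℓ C hℓ hC hΦ hbd (hut2 t))
                (K.norm_coe_le_norm t) (norm_nonneg _) (by positivity)
      set L := L₀.mkContinuous (40 * C / ℓ) hLbound with hLdef
      apply HasFDerivAt.differentiableAt (f' := L)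
      refine HasFDerivAt.of_isLittleO ?_
      rw [Asymptotics.isLittleO_iff]
      intro cc hcc
      have hM : (0:ℝ) < 32 * C / ℓ ^ 2 := by positivity
      set δ : ℝ := min (ℓ / 16) (cc / (32 * C / ℓ ^ 2)) with hδdef
      have hδpos : 0 < δ := lt_min (by positivity) (by positivity)
      filter_upwards [Metric.ball_mem_nhds u hδpos] with v hv
      have hdist : ‖v - u‖ < δ := by rwa [mem_ball, dist_eq_norm] at hv
      have hptK : ∀ t, ‖v t - u t‖ ≤ ‖v - u‖ := fun t => by
        simpa using (v - u).norm_coe_le_norm t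
      have hvmem : ∀ t, v t ∈ ball c ℓ := fun t => by
        rw [mem_ball, dist_eq_norm]
        have h1 := hptK t
        have h2 := hu t
        have h3 : δ ≤ ℓ / 16 := min_le_left _ _
        calc ‖v t - c‖ = ‖(v t - u t) + (u t - c)‖ := by abel_nf
          _ ≤ ‖v t - u t‖ + ‖u t - c‖ := norm_add_le _ _
          _ < ℓ := by linarith
      have humem : ∀ t, u t ∈ ball c ℓ := fun t => by
        rw [mem_ball, dist_eq_norm]
        have := hu t
        linarith
      simp only [dif_pos hvmem, dif_pos humem]
      refine (ContinuousMap.norm_le _ (by positivity)).2 fun t => ?_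
      simp only [ContinuousMap.sub_apply, ContinuousMap.coe_mk, hLdef,
        LinearMap.mkContinuous_apply, hL₀def, LinearMap.coe_mk, AddHom.coe_mk]
      have hKsmall : ‖v t - u t‖ ≤ ℓ / 8 := by
        have h1 := hptK t
        have h3 : δ ≤ ℓ / 16 := min_le_left _ _
        linarith
      have htay := Stmt17Aux.taylor_half Φ c ℓ C hℓ hC.le hΦ hbd (hut2 t) hKsmall
      have hrw : u t + (v t - u t) = v t := by abel
      rw [hrw] at htay
      have hδ2 : ‖v - u‖ ≤ cc / (32 * C / ℓ ^ 2) :=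
        le_of_lt (lt_of_lt_of_le hdist (min_le_right _ _))
      calc ‖Φ (v t) - Φ (u t) - fderiv ℂ Φ (u t) (v t - u t)‖
          ≤ 32 * C * ‖v t - u t‖ ^ 2 / ℓ ^ 2 := htay
        _ = 32 * C / ℓ ^ 2 * (‖v t - u t‖ * ‖v t - u t‖) := by rw [sq]; ring
        _ ≤ 32 * C / ℓ ^ 2 * (‖v - u‖ * ‖v - u‖) := by
            have h1 := hptK t
            gcongr
        _ = 32 * C / ℓ ^ 2 * ‖v - u‖ * ‖v - u‖ := by ring
        _ ≤ 32 * C / ℓ ^ 2 * (cc / (32 * C / ℓ ^ 2)) * ‖v - u‖ := by gcongr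
        _ = cc * ‖v - u‖ := by
            congr 1
            field_simp
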